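/- Let G be a finite group, A a normal subgroup with G/A a π-group, and H a π-Hall subgroup of A. If the conjugation action of G leaves the A-conjugacy class {H^a : a ∈ A} invariant, then there exists a π-Hall subgroup H̄ of G with H̄ ∩ A = H. -/

import Mathlib

/-!
By the Frattini argument, `G = N_G(H) A`. Inside `N = N_G(H)` the subgroup `H` is normal, and
`(A ∩ N)/H` is a normal π'-subgroup of `N/H` (its order divides `|A : H|`) whose index
`|N : A ∩ N| = |G : A|` is a π-number, so Schur–Zassenhaus gives a complement. Its preimage `H̄`
in `N` satisfies `H̄ ∩ A = H` and `H̄ A = G`, hence `|H̄| = |H| |G : A|` and `|G : H̄| = |A : H|`.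
-/

def conjS {G : Type*} [Group G] (g : G) (H : Subgroup G) : Subgroup G :=
  H.map (MulAut.conj g⁻¹).toMonoidHom

def IsHall {G : Type*} [Group G] (π : Set ℕ) (H : Subgroup G) : Prop :=
  (∀ p : ℕ, p.Prime → p ∣ Nat.card H → p ∈ π) ∧
  (∀ p : ℕ, p.Prime → p ∣ H.index → p ∉ π)

open Subgroup

section conjS

variable {G : Type*} [Group G]

lemma mem_conjS {g x : G} {H : Subgroup G} : x ∈ conjS g H ↔ g * x * g⁻¹ ∈ H := by
  constructor
  · rintro ⟨h, hh, rfl⟩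
    simpa [mul_assoc] using hh
  · intro hx
    exact ⟨g * x * g⁻¹, hx, by simp [mul_assoc]⟩

lemma mul_inv_mem_normalizer_of_conjS_eq {g a : G} {H : Subgroup G}
    (h : conjS g H = conjS a H) : g * a⁻¹ ∈ normalizer (H : Set G) := by
  rw [mem_normalizer_iff]
  intro x
  rw [show g * a⁻¹ * x * (g * a⁻¹)⁻¹ = g * (a⁻¹ * x * a) * g⁻¹ by group, ← mem_conjS, h,
    mem_conjS, show a * (a⁻¹ * x * a) * a⁻¹ = x by group]

lemma normalizer_sup_eq_top_of_forall_conjS_eq {A H : Subgroup G}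
    (hinv : ∀ g : G, ∃ a ∈ A, conjS g H = conjS a H) : normalizer (H : Set G) ⊔ A = ⊤ := by
  refine eq_top_iff.mpr fun g _ => ?_
  obtain ⟨a, haA, hg⟩ := hinv g
  simpa using mul_mem (mem_sup_left (mul_inv_mem_normalizer_of_conjS_eq hg)) (mem_sup_right haA)

end conjS

namespace Subgroup

variable {G : Type*} [Group G]

lemma exists_inf_eq_sup_eq_top_of_coprime [Finite G] {K M : Subgroup G} [K.Normal] [M.Normal]
    (hKM : K ≤ M) (hcop : Nat.Coprime (K.relIndex M) M.index) :
    ∃ L : Subgroup G, L ⊓ M = K ∧ L ⊔ M = ⊤ := by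
  set f := QuotientGroup.mk' K
  have hf : Function.Surjective f := QuotientGroup.mk'_surjective K
  have hker : f.ker = K := QuotientGroup.ker_mk' K
  have hcard : Nat.card (M.map f) = K.relIndex M := by rw [← relIndex_ker, hker]
  have hindex : (M.map f).index = M.index := index_map_eq _ hf (hker.le.trans hKM)
  obtain ⟨C, hC⟩ := exists_right_complement'_of_coprime (N := M.map f) (by rwa [hcard, hindex])
  refine ⟨C.comap f, le_antisymm ?_ (le_inf (hker.ge.trans (ker_le_comap f C)) hKM), ?_⟩
  · rintro x ⟨hxC, hxM⟩
    have hx : f x ∈ M.map f ⊓ C := ⟨mem_map_of_mem f hxM, hxC⟩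
    rw [disjoint_iff.mp hC.disjoint] at hx
    exact hker.le hx
  · have hsup : (C.comap f ⊔ M).map f = ⊤ := by
      rw [map_sup, map_comap_eq_self_of_surjective hf, sup_comm, hC.sup_eq_top]
    rw [← comap_map_eq_self (hker.le.trans (hKM.trans le_sup_right)), hsup, comap_top]

lemma relIndex_eq_index_of_sup_eq_top {A X : Subgroup G} [A.Normal] (h : X ⊔ A = ⊤) :
    A.relIndex X = A.index := by
  rw [← relIndex_sup_right, h, relIndex_top_right]

lemma card_eq_card_inf_mul_index_of_sup_eq_top {A X : Subgroup G} [A.Normal] (h : X ⊔ A = ⊤) :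
    Nat.card X = Nat.card (X ⊓ A : Subgroup G) * A.index := by
  rw [← relIndex_eq_index_of_sup_eq_top h, ← inf_relIndex_left, ← relIndex_bot_left,
    ← relIndex_bot_left, relIndex_mul_relIndex _ _ _ bot_le inf_le_left]

lemma map_subtype_inf_eq {N A H : Subgroup G} {L : Subgroup N} (hHN : H ≤ N)
    (h : L ⊓ A.subgroupOf N = H.subgroupOf N) : L.map N.subtype ⊓ A = H := by
  have hL : L.map N.subtype ≤ N := map_subtype_le L
  rw [← inf_of_le_left hHN, ← subgroupOf_map_subtype H N, ← h,
    map_inf_eq _ _ _ N.subtype_injective, subgroupOf_map_subtype, ← inf_assoc,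
    inf_of_le_left (inf_le_left.trans hL)]

lemma map_subtype_sup_eq_top {N A : Subgroup G} {L : Subgroup N} (hN : N ⊔ A = ⊤)
    (h : L ⊔ A.subgroupOf N = ⊤) : L.map N.subtype ⊔ A = ⊤ := by
  have hmap := congrArg (map N.subtype) h
  rw [map_sup, subgroupOf_map_subtype, ← MonoidHom.range_eq_map, range_subtype] at hmap
  have hNle : N ≤ L.map N.subtype ⊔ A := hmap.ge.trans (sup_le_sup_left inf_le_left _)
  exact top_le_iff.mp (hN ▸ sup_le hNle le_sup_right)

end Subgroup

lemma isHall_of_sup_eq_top {G : Type*} [Group G] [Finite G] {π : Set ℕ} {A X : Subgroup G}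
    [A.Normal] (hsup : X ⊔ A = ⊤) (hpi : ∀ p : ℕ, p.Prime → p ∣ A.index → p ∈ π)
    (hHall : IsHall π ((X ⊓ A).subgroupOf A)) : IsHall π X := by
  have hcardX := card_eq_card_inf_mul_index_of_sup_eq_top hsup
  have hcardInf : Nat.card ((X ⊓ A).subgroupOf A) = Nat.card (X ⊓ A : Subgroup G) :=
    Nat.card_congr (subgroupOfEquivOfLe inf_le_right).toEquiv
  have hindex : X.index = ((X ⊓ A).subgroupOf A).index := by
    have hcardA : Nat.card A = Nat.card (X ⊓ A : Subgroup G) * (X ⊓ A).relIndex A := by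
      rw [← relIndex_bot_left, ← relIndex_bot_left, relIndex_mul_relIndex _ _ _ bot_le inf_le_right]
    refine Nat.eq_of_mul_eq_mul_right (Nat.card_pos (α := X)) ?_
    rw [index_mul_card, ← A.card_mul_index, hcardA, hcardX, relIndex]
    ring
  refine ⟨fun p hp hdvd => ?_, fun p hp hdvd => hHall.2 p hp (hindex ▸ hdvd)⟩
  rw [hcardX] at hdvd
  rcases hp.dvd_mul.mp hdvd with h | h
  · exact hHall.1 p hp (hcardInf ▸ h)
  · exact hpi p hp h

/-- Let `A ⊴ G` with `G/A` a π-group and `H ≤ A` a π-Hall subgroup of `A`.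
If conjugation by `G` leaves the `A`-class `{H^a : a ∈ A}` invariant, then
there is a π-Hall subgroup `H̄` of `G` with `H̄ ∩ A = H`. -/
theorem stmt18 {G : Type*} [Group G] [Finite G] (π : Set ℕ)
    (A H : Subgroup G) (hA : A.Normal) (hHA : H ≤ A)
    (hpi : ∀ p : ℕ, p.Prime → p ∣ A.index → p ∈ π)
    (hHall : IsHall π (H.subgroupOf A))
    (hinv : ∀ g : G, ∃ a ∈ A, conjS g H = conjS a H) :
    ∃ Hbar : Subgroup G, IsHall π Hbar ∧ Hbar ⊓ A = H := by
  set N := normalizer (H : Set G)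
  have hHN : H ≤ N := le_normalizer
  have hsup : N ⊔ A = ⊤ := normalizer_sup_eq_top_of_forall_conjS_eq hinv
  have hrelIndex : (H.subgroupOf N).relIndex (A.subgroupOf N) ∣ H.relIndex A := by
    rw [← inf_subgroupOf_right A N, relIndex_subgroupOf inf_le_right]
    exact Dvd.intro _ (relIndex_mul_relIndex H _ A (le_inf hHA hHN) inf_le_left)
  have hcop : Nat.Coprime ((H.subgroupOf N).relIndex (A.subgroupOf N)) (A.subgroupOf N).index :=
    Nat.coprime_of_dvd fun p hp h₁ h₂ => hHall.2 p hp (h₁.trans hrelIndex)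
      (hpi p hp (relIndex_eq_index_of_sup_eq_top hsup ▸ h₂))
  obtain ⟨L, hLinf, hLsup⟩ :=
    exists_inf_eq_sup_eq_top_of_coprime (K := H.subgroupOf N) (M := A.subgroupOf N)
      (fun x hx => hHA hx) hcop
  have hinf := map_subtype_inf_eq hHN hLinf
  exact ⟨_, isHall_of_sup_eq_top (map_subtype_sup_eq_top hsup hLsup) hpi (hinf ▸ hHall), hinf⟩
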